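/- (Coalescing Lemma) Let n ≥ 3 and r ≥ n−1, and let g ∈ ni(A_n, C_{3^r}). Then g is braid equivalent to some tuple g' = (g'_1,…,g'_r) in which the first two entries satisfy one of: g'_2 = (g'_1)^{-1}; or the product g'_1 g'_2 is a 3-cycle; or g'_1 = g'_2. -/

import Mathlib

/-- Elementary braid move: replace adjacent entries `(a, b)` by `(a * b * a⁻¹, a)`. -/
def BraidMove {G : Type*} [Group G] (x y : List G) : Prop :=
  ∃ (l₁ l₂ : List G) (a b : G),
    x = l₁ ++ a :: b :: l₂ ∧ y = l₁ ++ (a * b * a⁻¹) :: a :: l₂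

/-- Braid equivalence: the equivalence relation generated by elementary braid moves. -/
def BraidEquiv {G : Type*} [Group G] : List G → List G → Prop :=
  Relation.EqvGen BraidMove

/-- The Nielsen class `ni(A_n, C_{3^r})`: `r`-tuples of 3-cycles in the alternating
group `A_n` with product 1 whose entries generate `A_n`. -/
def NielsenA (n r : ℕ) (l : List (Equiv.Perm (Fin n))) : Prop :=
  l.length = r ∧ (∀ σ ∈ l, σ.IsThreeCycle) ∧ l.prod = 1 ∧
    Subgroup.closure {σ | σ ∈ l} = alternatingGroup (Fin n)

/-!
Fix a point `p` moved by the first entry. A braid move carrying an entry `x` that fixes `p`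
across an entry `d` replaces `d` by `x * d * x⁻¹`, which moves `p` exactly when `d` does; so the
tuple can be braided until the entries moving `p` come first. Since the product is `1`, there is
never exactly one of them. If the first two, `a` and `b`, are in none of the three wanted
configurations, comparing the supports of the two 3-cycles shows that `a * b * a⁻¹` or `b⁻¹ * a * b`
fixes `p`, and the corresponding braid move lowers the number of entries moving `p`.
-/

namespace BraidEquiv

variable {G : Type*} [Group G] {x y z : List G}

theorem refl (x : List G) : BraidEquiv x x := Relation.EqvGen.refl x

theorem trans (h₁ : BraidEquiv x y) (h₂ : BraidEquiv y z) : BraidEquiv x z :=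
  Relation.EqvGen.trans _ _ _ h₁ h₂

theorem cons (c : G) (h : BraidEquiv x y) : BraidEquiv (c :: x) (c :: y) := by
  induction h with
  | rel u v huv =>
    obtain ⟨l₁, l₂, a, b, rfl, rfl⟩ := huv
    exact Relation.EqvGen.rel _ _ ⟨c :: l₁, l₂, a, b, rfl, rfl⟩
  | refl u => exact refl _
  | symm u v _ ih => exact Relation.EqvGen.symm _ _ ih
  | trans u v w _ _ ih₁ ih₂ => exact ih₁.trans ih₂

theorem prod_eq (h : BraidEquiv x y) : x.prod = y.prod := by
  induction h with
  | rel u v huv =>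
    obtain ⟨l₁, l₂, a, b, rfl, rfl⟩ := huv
    simp [mul_assoc]
  | refl u => rfl
  | symm u v _ ih => exact ih.symm
  | trans u v w _ _ ih₁ ih₂ => exact ih₁.trans ih₂

theorem forall_mem {P : G → Prop} (hP : ∀ g h, P h → P (g * h * g⁻¹))
    (h : BraidEquiv x y) (hx : ∀ g ∈ x, P g) : ∀ g ∈ y, P g := by
  suffices (∀ g ∈ x, P g) ↔ ∀ g ∈ y, P g from this.mp hx
  clear hx
  induction h with
  | rel u v huv =>
    obtain ⟨l₁, l₂, a, b, rfl, rfl⟩ := huv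
    have hb : P (a * b * a⁻¹) ↔ P b :=
      ⟨fun h ↦ by simpa [mul_assoc] using hP a⁻¹ _ h, hP a b⟩
    simp only [List.forall_mem_append, List.forall_mem_cons, hb]
    tauto
  | refl u => rfl
  | symm u v _ ih => exact ih.symm
  | trans u v w _ _ ih₁ ih₂ => exact ih₁.trans ih₂

end BraidEquiv

section Braid

variable {G : Type*} [Group G]

theorem braidEquiv_cons_cons (a b : G) (t : List G) :
    BraidEquiv (a :: b :: t) (a * b * a⁻¹ :: a :: t) :=
  Relation.EqvGen.rel _ _ ⟨[], t, a, b, rfl, rfl⟩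

theorem braidEquiv_cons_cons_inv (a b : G) (t : List G) :
    BraidEquiv (a :: b :: t) (b :: b⁻¹ * a * b :: t) := by
  have h := braidEquiv_cons_cons b (b⁻¹ * a * b) t
  rw [show b * (b⁻¹ * a * b) * b⁻¹ = a by group] at h
  exact Relation.EqvGen.symm _ _ h

theorem braidEquiv_cons_append_map_conj (x : G) (c t : List G) :
    BraidEquiv (x :: (c ++ t)) (c.map (fun d ↦ x * d * x⁻¹) ++ x :: t) := by
  induction c with
  | nil => exact .refl _
  | cons d c ih => exact (braidEquiv_cons_cons x d _).trans (ih.cons _)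

theorem exists_braidEquiv_append_notMem_mem (H : Subgroup G) (l : List G) :
    ∃ c f : List G, BraidEquiv l (c ++ f) ∧ (∀ g ∈ c, g ∉ H) ∧ ∀ g ∈ f, g ∈ H := by
  induction l with
  | nil => exact ⟨[], [], .refl _, by simp, by simp⟩
  | cons x t ih =>
    obtain ⟨c, f, hl, hc, hf⟩ := ih
    by_cases hx : x ∈ H
    · refine ⟨c.map (fun d ↦ x * d * x⁻¹), x :: f,
        (hl.cons x).trans (braidEquiv_cons_append_map_conj x c f), ?_, ?_⟩
      · simpa [H.mul_mem_cancel_right (H.inv_mem hx), H.mul_mem_cancel_left hx] using hc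
      · simpa [hx] using hf
    · exact ⟨x :: c, f, hl.cons x, by simpa [hx] using hc, hf⟩

theorem exists_braidEquiv_cons_cons (H : Subgroup G) {P : G → Prop}
    (hP : ∀ g h, P h → P (g * h * g⁻¹)) {Q : G → G → Prop}
    (hQ : ∀ a b, P a → P b → a ∉ H → b ∉ H → Q a b ∨ a * b * a⁻¹ ∈ H ∨ b⁻¹ * a * b ∈ H)
    {a : G} {c f : List G} (ha : a ∉ H) (hc : ∀ g ∈ c, g ∉ H) (hf : ∀ g ∈ f, g ∈ H)
    (hPl : ∀ g ∈ a :: (c ++ f), P g) (hprod : (a :: (c ++ f)).prod = 1) :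
    ∃ a' b t, BraidEquiv (a :: (c ++ f)) (a' :: b :: t) ∧ Q a' b := by
  induction hn : c.length generalizing a c f with
  | zero =>
    rw [List.length_eq_zero_iff.mp hn] at hprod
    exact absurd (hprod ▸ H.one_mem) (by simpa [H.mul_mem_cancel_right (H.list_prod_mem hf)])
  | succ n ih =>
    obtain ⟨b, c, rfl⟩ := List.exists_cons_of_length_eq_add_one hn
    have hb : b ∉ H := hc b (by simp)
    have hc' : ∀ g ∈ c, g ∉ H := fun g hg ↦ hc g (by simp [hg])
    have conj_notMem {x : G} (hx : x ∈ H) :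
        ∀ g ∈ c.map (fun d ↦ x * d * x⁻¹), g ∉ H := by
      simpa [H.mul_mem_cancel_right (H.inv_mem hx), H.mul_mem_cancel_left hx] using hc'
    have descend (a₁ : G) (c₁ f₁ : List G)
        (h : BraidEquiv (a :: b :: (c ++ f)) (a₁ :: (c₁ ++ f₁)))
        (ha₁ : a₁ ∉ H) (hc₁ : ∀ g ∈ c₁, g ∉ H) (hf₁ : ∀ g ∈ f₁, g ∈ H) (hn₁ : c₁.length = n) :
        ∃ a' b' t, BraidEquiv (a :: b :: (c ++ f)) (a' :: b' :: t) ∧ Q a' b' := by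
      obtain ⟨a', b', t, h', hQ'⟩ := ih ha₁ hc₁ hf₁ (h.forall_mem hP hPl)
        (h.prod_eq ▸ hprod) hn₁
      exact ⟨a', b', t, h.trans h', hQ'⟩
    rcases hQ a b (hPl a (by simp)) (hPl b (by simp)) ha hb with hab | hx | hy
    · exact ⟨a, b, c ++ f, .refl _, hab⟩
    · set x := a * b * a⁻¹
      refine descend (x * a * x⁻¹) (c.map (fun d ↦ x * d * x⁻¹)) (x :: f) ?_ ?_ (conj_notMem hx)
        (by simpa [hx] using hf) (by simpa using hn)
      · exact (braidEquiv_cons_cons a b _).trans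
          (braidEquiv_cons_append_map_conj x (a :: c) f)
      · simpa [H.mul_mem_cancel_right (H.inv_mem hx), H.mul_mem_cancel_left hx] using ha
    · set y := b⁻¹ * a * b
      exact descend b (c.map (fun d ↦ y * d * y⁻¹)) (y :: f)
        ((braidEquiv_cons_cons_inv a b _).trans ((braidEquiv_cons_append_map_conj y c f).cons b))
        hb (conj_notMem hy) (by simpa [hy] using hf) (by simpa using hn)

end Braid

namespace Equiv.Perm.IsThreeCycle

variable {α : Type*} [Fintype α] [DecidableEq α] {a b : Perm α} {p : α}

theorem conj (hb : b.IsThreeCycle) (a : Perm α) : (a * b * a⁻¹).IsThreeCycle := by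
  rw [IsThreeCycle, cycleType_conj]
  exact hb

theorem apply_apply_apply (ha : a.IsThreeCycle) (p : α) : a (a (a p)) = p := by
  have h : (a ^ 3) p = p := by rw [← ha.orderOf, pow_orderOf_eq_one]; rfl
  simpa [pow_succ] using h

theorem eq_inv_or_isThreeCycle_mul_or_eq (ha : a.IsThreeCycle) (hb : b.IsThreeCycle)
    (hap : p ∈ a.support) (hbp : p ∈ b.support) (hab : a (a p) ∈ b.support)
    (hba : b p ∈ a.support) :
    b = a⁻¹ ∨ (a * b).IsThreeCycle ∨ a = b := by
  have hna := ha.nodup_iff_mem_support.mpr hap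
  have hnb := hb.nodup_iff_mem_support.mpr hbp
  simp only [List.nodup_cons, List.mem_cons, List.not_mem_nil, or_false, not_or,
    List.nodup_nil, not_false_eq_true, and_true] at hna hnb
  rw [ha.support_eq_iff_mem_support.mpr hap] at hba
  rw [hb.support_eq_iff_mem_support.mpr hbp] at hab
  simp only [Finset.mem_insert, Finset.mem_singleton] at hab hba
  have eb := hb.eq_swap_mul_swap_iff_mem_support.mpr hbp
  rcases hba with h | h | h
  · exact absurd h.symm hnb.1.1
  · have hs : a (a p) = b (b p) := by
      rcases hab with h' | h' | h'
      · exact absurd h'.symm hna.1.2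
      · exact absurd (h'.trans h).symm hna.2
      · exact h'
    right; right
    rw [eb, ← hs, h]
    exact ha.eq_swap_mul_swap_iff_mem_support.mpr hap
  · -- Reading `a` off from the point `a p` makes `a * b` collapse to two transpositions.
    have ea : a = swap (a p) (a (a p)) * swap (a (a p)) p := by
      have := ha.eq_swap_mul_swap_iff_mem_support.mpr (apply_mem_support.mpr hap)
      rwa [ha.apply_apply_apply] at this
    have eb' : b = swap p (a (a p)) * swap (a (a p)) (b (b p)) := by
      rw [← h]; exact eb
    have hprod : a * b = swap (a p) (a (a p)) * swap (a (a p)) (b (b p)) := by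
      rw [congrArg₂ (· * ·) ea eb', swap_comm p, mul_assoc, swap_mul_self_mul]
    by_cases hs : b (b p) = a p
    · left
      refine eq_inv_of_mul_eq_one_right ?_
      rw [hprod, hs, swap_comm, swap_mul_self]
    · right; left
      rw [hprod, swap_comm]
      refine isThreeCycle_swap_mul_swap_same (Ne.symm hna.2) ?_ (Ne.symm hs)
      rw [← h]; exact hnb.2

open MulAction in
theorem eq_inv_or_isThreeCycle_mul_or_eq_or_conj_mem_stabilizer (ha : a.IsThreeCycle)
    (hb : b.IsThreeCycle)     (hap : a ∉ stabilizer (Perm α) p) (hbp : b ∉ stabilizer (Perm α) p) :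
    (b = a⁻¹ ∨ (a * b).IsThreeCycle ∨ a = b) ∨
      a * b * a⁻¹ ∈ stabilizer (Perm α) p ∨ b⁻¹ * a * b ∈ stabilizer (Perm α) p := by
  have hconj (x y : Perm α) : x * y * x⁻¹ ∈ stabilizer (Perm α) p ↔ y (x⁻¹ p) = x⁻¹ p := by
    simp [mem_stabilizer_iff, ← eq_inv_iff_eq]
  have ha_inv : a⁻¹ p = a (a p) := by rw [inv_eq_iff_eq, ha.apply_apply_apply]
  have hb_conj := hconj b⁻¹ a
  rw [inv_inv] at hb_conj
  rw [hconj, ha_inv, hb_conj]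
  simp only [mem_stabilizer_iff, Perm.smul_def] at hap hbp
  rw [or_iff_not_imp_right, not_or]
  rintro ⟨hab, hba⟩
  exact ha.eq_inv_or_isThreeCycle_mul_or_eq hb (mem_support.mpr hap) (mem_support.mpr hbp)
    (mem_support.mpr hab) (mem_support.mpr hba)

end Equiv.Perm.IsThreeCycle

/-- **Coalescing Lemma.** For `n ≥ 3`, `r ≥ n − 1`, any `g ∈ ni(A_n, C_{3^r})` is braid
equivalent to a tuple whose first two entries `a, b` satisfy `b = a⁻¹`, or `a * b` is a
3-cycle, or `a = b`. -/
theorem coalescing_lemma (n r : ℕ) (hn : 3 ≤ n) (hr : n - 1 ≤ r)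
    (g : List (Equiv.Perm (Fin n))) (hg : NielsenA n r g) :
    ∃ (a b : Equiv.Perm (Fin n)) (t : List (Equiv.Perm (Fin n))),
      BraidEquiv g (a :: b :: t) ∧
      (b = a⁻¹ ∨ (a * b).IsThreeCycle ∨ a = b) := by
  obtain ⟨hlen, h3, hprod, -⟩ := hg
  obtain ⟨g₀, t, rfl⟩ := List.exists_cons_of_length_pos (by omega : 0 < g.length)
  have hg₀ := h3 g₀ List.mem_cons_self
  obtain ⟨p, hp⟩ : g₀.support.Nonempty := by
    rw [← Finset.card_pos, hg₀.card_support]; norm_num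
  set H := MulAction.stabilizer (Equiv.Perm (Fin n)) p
  have hg₀H : g₀ ∉ H := by simpa [H] using hp
  obtain ⟨c, f, ht, hc, hf⟩ := exists_braidEquiv_append_notMem_mem H t
  have hg := ht.cons g₀
  have hconj (x y : Equiv.Perm (Fin n)) (hy : y.IsThreeCycle) : (x * y * x⁻¹).IsThreeCycle :=
    hy.conj x
  obtain ⟨a, b, t', hg', hab⟩ := exists_braidEquiv_cons_cons H hconj
    (fun a b ha hb ↦ ha.eq_inv_or_isThreeCycle_mul_or_eq_or_conj_mem_stabilizer hb)
    hg₀H hc hf (hg.forall_mem hconj h3) (hg.prod_eq ▸ hprod)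
  exact ⟨a, b, t', hg.trans hg', hab⟩
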